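/- For every infinite-dimensional Hilbert space (E, ‖·‖₁) there exists a norm ‖·‖₂ on E induced by an inner product, making (E, ‖·‖₂) a Hilbert space, such that ‖·‖₁ and ‖·‖₂ are not equivalent. -/

import Mathlib

/-!
Transport the inner product of `E` along a linear bijection `T : E → E`, i.e. take
`⟪u, v⟫₂ := ⟪T u, T v⟫`. Then `u ↦ T u` is an isometry of `(E, ‖·‖₂)` onto the complete space
`(E, ‖·‖)`, so `‖·‖₂` is complete; and `‖·‖₂` is equivalent to `‖·‖` only if `T` is bounded.
Infinite dimension leaves room for an unbounded `T`: scale the `n`-th vector of a countable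
part of a Hamel basis by `n + 1`.
-/

def IsCauchyWith {E : Type*} [AddCommGroup E] (n : E → ℝ) (u : ℕ → E) : Prop :=
  ∀ ε > (0 : ℝ), ∃ N : ℕ, ∀ m ≥ N, ∀ k ≥ N, n (u m - u k) < ε

def CompleteWith {E : Type*} [AddCommGroup E] (n : E → ℝ) : Prop :=
  ∀ u : ℕ → E, IsCauchyWith n u →
    ∃ l : E, ∀ ε > (0 : ℝ), ∃ N : ℕ, ∀ m ≥ N, n (u m - l) < ε

theorem exists_linearEquiv_not_bounded {𝕜 E : Type*} [RCLike 𝕜] [NormedAddCommGroup E]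
    [NormedSpace 𝕜 E] (h : ¬ FiniteDimensional 𝕜 E) :
    ∃ T : E ≃ₗ[𝕜] E, ∀ C : ℝ, ∃ x : E, C * ‖x‖ < ‖T x‖ := by
  let b := Module.Basis.ofVectorSpace 𝕜 E
  have : Infinite (Module.Basis.ofVectorSpaceIndex 𝕜 E) :=
    not_finite_iff_infinite.mp fun _ => h (Module.Finite.of_basis b)
  let f := Infinite.natEmbedding (Module.Basis.ofVectorSpaceIndex 𝕜 E)
  let w : Module.Basis.ofVectorSpaceIndex 𝕜 E → 𝕜ˣ := fun i =>
    Units.mk0 (((Function.invFun f i : ℕ) : 𝕜) + 1) (Nat.cast_add_one_ne_zero _)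
  refine ⟨b.equiv (b.unitsSMul w) (Equiv.refl _), fun C => ?_⟩
  obtain ⟨n, hn⟩ := exists_nat_gt C
  refine ⟨b (f n), ?_⟩
  have hb : 0 < ‖b (f n)‖ := norm_pos_iff.mpr (b.ne_zero _)
  have hw : ‖(w (f n) : 𝕜)‖ = n + 1 := by
    simp only [w, Units.val_mk0, Function.leftInverse_invFun f.injective n]
    exact_mod_cast RCLike.norm_natCast (K := 𝕜) (n + 1)
  rw [b.equiv_apply, Equiv.refl_apply, b.unitsSMul_apply, Units.smul_def, norm_smul, hw]
  gcongr
  linarith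

section Comap

variable {𝕜 E F : Type*} [RCLike 𝕜] [AddCommGroup E] [Module 𝕜 E]
  [NormedAddCommGroup F] [InnerProductSpace 𝕜 F]

abbrev InnerProductSpace.Core.comap (T : E →ₗ[𝕜] F) (hT : Function.Injective T) :
    InnerProductSpace.Core 𝕜 E where
  inner x y := inner 𝕜 (T x) (T y)
  conj_inner_symm _ _ := _root_.inner_conj_symm _ _
  re_inner_nonneg _ := _root_.inner_self_nonneg
  add_left _ _ _ := by rw [map_add, _root_.inner_add_left]
  smul_left _ _ _ := by rw [map_smul, _root_.inner_smul_left]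
  definite _ hx := hT <| by rw [_root_.inner_self_eq_zero.mp hx, map_zero]

theorem InnerProductSpace.Core.sqrt_re_inner_comap_self (T : E →ₗ[𝕜] F)
    (hT : Function.Injective T) (x : E) :
    √(RCLike.re ((InnerProductSpace.Core.comap T hT).inner x x)) = ‖T x‖ :=
  (_root_.norm_eq_sqrt_re_inner (𝕜 := 𝕜) (T x)).symm

end Comap

theorem completeWith_norm_comp {E F : Type*} [AddCommGroup E] [NormedAddCommGroup F]
    [CompleteSpace F] (T : E ≃+ F) : CompleteWith fun x => ‖T x‖ := by
  intro u hu
  have hTu : CauchySeq (T ∘ u) := Metric.cauchySeq_iff.2 fun ε hε => by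
    obtain ⟨N, hN⟩ := hu ε hε
    exact ⟨N, fun m hm k hk => by
      simpa only [dist_eq_norm, Function.comp_apply, map_sub] using hN m hm k hk⟩
  obtain ⟨l, hl⟩ := cauchySeq_tendsto_of_complete hTu
  refine ⟨T.symm l, fun ε hε => ?_⟩
  obtain ⟨N, hN⟩ := Metric.tendsto_atTop.1 hl ε hε
  exact ⟨N, fun m hm => by
    simpa only [map_sub, AddEquiv.apply_symm_apply, dist_eq_norm, Function.comp_apply]
      using hN m hm⟩

/-- every infinite-dimensional Hilbert space admits a second norm,
induced by an inner product and complete, that is not equivalent to the original. -/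
theorem stmt9 {𝕜 E : Type*} [RCLike 𝕜] [NormedAddCommGroup E]
    [InnerProductSpace 𝕜 E] [CompleteSpace E] (h : ¬ FiniteDimensional 𝕜 E) :
    ∃ c : InnerProductSpace.Core 𝕜 E,
      CompleteWith (fun u : E => Real.sqrt (RCLike.re (c.inner u u))) ∧
      ¬ ∃ c₁ > (0 : ℝ), ∃ c₂ > (0 : ℝ), ∀ u : E,
          c₁ * ‖u‖ ≤ Real.sqrt (RCLike.re (c.inner u u)) ∧
          Real.sqrt (RCLike.re (c.inner u u)) ≤ c₂ * ‖u‖ := by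
  obtain ⟨T, hT⟩ := exists_linearEquiv_not_bounded h
  refine ⟨.comap T.toLinearMap T.injective, ?_, ?_⟩ <;>
    simp only [InnerProductSpace.Core.sqrt_re_inner_comap_self, LinearEquiv.coe_coe]
  · exact completeWith_norm_comp T.toAddEquiv
  · rintro ⟨c₁, -, c₂, -, hle⟩
    obtain ⟨x, hx⟩ := hT c₂
    exact (hle x).2.not_gt hx
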